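/- arXiv:1902.10996 — 3 statements merged into one kernel-verified Lean document; each statement's English description precedes it below -/
import Mathlib

section
/- Let 𝔫 be a finite-dimensional real 2-step nilpotent Lie algebra with BCH group law ∘ and dilations δ_t. Let d be a metric on 𝔫 that is left-invariant, homogeneous, and proper, and let ‖·‖_Z be a norm on ⁅𝔫, 𝔫⁆. Set K₁ := sup{‖(−x) ∘ y‖_Z : d(0, x) ≤ 1, d(0, y) ≤ 1, (−x) ∘ y ∈ ⁅𝔫, 𝔫⁆}. Then K₁ is finite, and for every r ≥ 1: sup{‖(−x) ∘ y‖_Z : d(0, x) ≤ r, d(0, y) ≤ r, (−x) ∘ y ∈ ⁅𝔫, 𝔫⁆} = K₁ · r². -/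
noncomputable section

/-- The Baker–Campbell–Hausdorff group law on a 2-step nilpotent Lie algebra. -/
def bch {𝔫 : Type*} [LieRing 𝔫] [LieAlgebra ℝ 𝔫] (x y : 𝔫) : 𝔫 :=
  x + y + (1 / 2 : ℝ) • ⁅x, y⁆

/-- The derived subalgebra ⁅𝔫, 𝔫⁆, as a linear subspace: the span of all brackets. -/
def derivedSubalg (𝔫 : Type*) [LieRing 𝔫] [LieAlgebra ℝ 𝔫] : Submodule ℝ 𝔫 :=
  Submodule.span ℝ {z : 𝔫 | ∃ x y : 𝔫, ⁅x, y⁆ = z}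

/-- The dilation `δ_t` associated to the projection `π` onto the complement `V∞`:
`δ_t(X + Y) = tX + t²Y` for `X ∈ V∞`, `Y ∈ ⁅𝔫, 𝔫⁆`. -/
def dil {𝔫 : Type*} [LieRing 𝔫] [LieAlgebra ℝ 𝔫] (π : 𝔫 →ₗ[ℝ] 𝔫) (t : ℝ) (x : 𝔫) : 𝔫 :=
  t • π x + t ^ 2 • (x - π x)

/-- `d` is a metric, given as a two-variable distance function. -/
structure IsMetricFun {X : Type*} (d : X → X → ℝ) : Prop where
  refl : ∀ x, d x x = 0
  eq_of_dist_eq_zero : ∀ x y, d x y = 0 → x = y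
  symm : ∀ x y, d x y = d y x
  triangle : ∀ x y z, d x z ≤ d x y + d y z

/-- `f` is a norm on the subspace `W`. -/
structure IsNormOn {𝔫 : Type*} [AddCommGroup 𝔫] [Module ℝ 𝔫]
    (W : Submodule ℝ 𝔫) (f : 𝔫 → ℝ) : Prop where
  nonneg : ∀ x ∈ W, 0 ≤ f x
  eq_zero : ∀ x ∈ W, f x = 0 → x = 0
  smul : ∀ (c : ℝ), ∀ x ∈ W, f (c • x) = |c| * f x
  add_le : ∀ x ∈ W, ∀ y ∈ W, f (x + y) ≤ f x + f y

/-!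
The dilation `δ_t` is an automorphism of the group law: the bracket only sees the `V∞`-components,
which `δ_t` scales by `t`, so `δ_t ⁅x, y⁆ = t² ⁅x, y⁆ = ⁅δ_t x, δ_t y⁆`. Since `δ_t` scales
`d(0, ·)` by `t` and acts on `⁅𝔫, 𝔫⁆` as multiplication by `t²`, the set of central defects of
radius `r` is `r²` times the one of radius `1`, and `sSup` commutes with multiplication by `r² ≥ 0`.
The defects of radius `r` are values of `‖·‖_Z` on the image of a compact set (two `d`-balls) under
the continuous map `(x, y) ↦ (-x) ∘ y`, and a norm on a finite-dimensional space is dominated by a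
continuous function, hence they are bounded.
-/

open Set Pointwise

section Bilinear

variable {E G F : Type*} [AddCommGroup E] [Module ℝ E] [TopologicalSpace E]
  [IsTopologicalAddGroup E] [ContinuousSMul ℝ E] [T2Space E] [FiniteDimensional ℝ E]
  [AddCommGroup G] [Module ℝ G] [TopologicalSpace G]
  [IsTopologicalAddGroup G] [ContinuousSMul ℝ G] [T2Space G] [FiniteDimensional ℝ G]
  [AddCommGroup F] [Module ℝ F] [TopologicalSpace F] [IsTopologicalAddGroup F]
  [ContinuousSMul ℝ F]

theorem LinearMap.continuous_uncurry_of_finiteDimensional (B : E →ₗ[ℝ] G →ₗ[ℝ] F) :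
    Continuous fun p : E × G => B p.1 p.2 := by
  let b := Module.finBasis ℝ E
  have hB : ∀ x y, B x y = ∑ i, b.repr x i • B (b i) y := fun x y => by
    conv_lhs => rw [← b.sum_repr x]
    simp only [map_sum, map_smul, LinearMap.sum_apply, LinearMap.smul_apply]
  refine (continuous_finsetSum _ fun i _ => ?_).congr fun p => (hB p.1 p.2).symm
  exact ((b.coord i).continuous_of_finiteDimensional.comp continuous_fst).smul
    ((B (b i)).continuous_of_finiteDimensional.comp continuous_snd)

end Bilinear

section NormOn

variable {E : Type*} [AddCommGroup E] [Module ℝ E] [TopologicalSpace E]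
  [IsTopologicalAddGroup E] [ContinuousSMul ℝ E] [T2Space E] [FiniteDimensional ℝ E]
  {W : Submodule ℝ E} {f : E → ℝ}

theorem IsNormOn.exists_continuous_majorant (hf : IsNormOn W f) :
    ∃ M : W → ℝ, Continuous M ∧ ∀ z : W, f z ≤ M z := by
  let b := Module.finBasis ℝ W
  refine ⟨fun z => ∑ j, |b.repr z j| * f (b j),
    continuous_finsetSum _ fun j _ =>
      (b.coord j).continuous_of_finiteDimensional.abs.mul continuous_const, fun z => ?_⟩
  let p : Seminorm ℝ W := Seminorm.of (fun z => f z)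
    (fun x y => hf.add_le x x.2 y y.2) (fun c x => hf.smul c x x.2)
  calc f z = p (∑ j, b.repr z j • b j) := by rw [b.sum_repr]; rfl
    _ ≤ ∑ j, p (b.repr z j • b j) :=
      Finset.le_sum_of_subadditive p (map_zero p).le (map_add_le_add p) _ _
    _ = ∑ j, |b.repr z j| * f (b j) := by simp only [map_smul_eq_mul, Real.norm_eq_abs]; rfl

theorem IsNormOn.bddAbove_image_inter (hf : IsNormOn W f) {K : Set E} (hK : IsCompact K) :
    BddAbove (f '' (K ∩ W)) := by
  obtain ⟨M, hM, hfM⟩ := hf.exists_continuous_majorant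
  have hK' : IsCompact ((↑) ⁻¹' K : Set W) := by
    rw [Subtype.isCompact_iff, image_preimage_eq_inter_range, Subtype.range_coe_subtype]
    exact hK.inter_right W.closed_of_finiteDimensional
  obtain ⟨C, hC⟩ := (hK'.image hM).bddAbove
  refine ⟨C, ?_⟩
  rintro _ ⟨z, ⟨hzK, hzW⟩, rfl⟩
  exact (hfM ⟨z, hzW⟩).trans (hC ⟨⟨z, hzW⟩, hzK, rfl⟩)

end NormOn

theorem sub_apply_mem_of_codisjoint {R M : Type*} [Ring R] [AddCommGroup M] [Module R M]
    {V W : Submodule R M} (hVW : Codisjoint V W) {π : M →ₗ[R] M} (hπV : ∀ v ∈ V, π v = v)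
    (hπW : ∀ w ∈ W, π w = 0) (x : M) : x - π x ∈ W := by
  obtain ⟨v, hv, w, hw, rfl⟩ := Submodule.mem_sup.mp (hVW.eq_top ▸ Submodule.mem_top : x ∈ V ⊔ W)
  rwa [map_add, hπV v hv, hπW w hw, add_zero, add_sub_cancel_left]

section TwoStep

variable {𝔫 : Type*} [LieRing 𝔫] [LieAlgebra ℝ 𝔫]

theorem lie_mem_derivedSubalg (x y : 𝔫) : ⁅x, y⁆ ∈ derivedSubalg 𝔫 :=
  Submodule.subset_span ⟨x, y, rfl⟩

theorem lie_eq_zero_of_mem_derivedSubalg (h2 : ∀ x y z : 𝔫, ⁅⁅x, y⁆, z⁆ = 0) {z : 𝔫}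
    (hz : z ∈ derivedSubalg 𝔫) (w : 𝔫) : ⁅z, w⁆ = 0 := by
  induction hz using Submodule.span_induction with
  | mem x hx => obtain ⟨a, b, rfl⟩ := hx; exact h2 a b w
  | zero => exact zero_lie w
  | add x y _ _ hx hy => rw [add_lie, hx, hy, add_zero]
  | smul c x _ hx => rw [smul_lie, hx, smul_zero]

theorem lie_eq_lie_of_sub_mem_derivedSubalg (h2 : ∀ x y z : 𝔫, ⁅⁅x, y⁆, z⁆ = 0)
    {x x' y y' : 𝔫} (hx : x - x' ∈ derivedSubalg 𝔫) (hy : y - y' ∈ derivedSubalg 𝔫) :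
    ⁅x, y⁆ = ⁅x', y'⁆ := by
  have h₁ := lie_eq_zero_of_mem_derivedSubalg h2 hx y
  have h₂ := lie_eq_zero_of_mem_derivedSubalg h2 hy x'
  rw [sub_lie, sub_eq_zero] at h₁ h₂
  rw [h₁, ← lie_skew, h₂, lie_skew]

variable (π : 𝔫 →ₗ[ℝ] 𝔫)

theorem dil_add (t : ℝ) (x y : 𝔫) : dil π t (x + y) = dil π t x + dil π t y := by
  simp only [dil, map_add]
  module

theorem dil_smul (t c : ℝ) (x : 𝔫) : dil π t (c • x) = c • dil π t x := by
  simp only [dil, map_smul]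
  module

theorem dil_neg (t : ℝ) (x : 𝔫) : dil π t (-x) = -dil π t x := by
  simpa using dil_smul π t (-1) x

theorem dil_zero (t : ℝ) : dil π t (0 : 𝔫) = 0 := by
  simpa using dil_smul π t 0 0

variable {π}

theorem dil_of_mem_derivedSubalg (hπW : ∀ z ∈ derivedSubalg 𝔫, π z = 0) (t : ℝ) {z : 𝔫}
    (hz : z ∈ derivedSubalg 𝔫) : dil π t z = t ^ 2 • z := by
  simp [dil, hπW z hz]

theorem lie_dil_dil (h2 : ∀ x y z : 𝔫, ⁅⁅x, y⁆, z⁆ = 0)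
    (hπ : ∀ x, x - π x ∈ derivedSubalg 𝔫) (t : ℝ) (x y : 𝔫) :
    ⁅dil π t x, dil π t y⁆ = t ^ 2 • ⁅x, y⁆ := by
  have hdil : ∀ x, dil π t x - t • π x ∈ derivedSubalg 𝔫 := fun x => by
    simpa [dil] using (derivedSubalg 𝔫).smul_mem (t ^ 2) (hπ x)
  rw [lie_eq_lie_of_sub_mem_derivedSubalg h2 (hdil x) (hdil y),
    lie_eq_lie_of_sub_mem_derivedSubalg h2 (hπ x) (hπ y), smul_lie, lie_smul, smul_smul, sq]

theorem dil_bch (h2 : ∀ x y z : 𝔫, ⁅⁅x, y⁆, z⁆ = 0) (hπ : ∀ x, x - π x ∈ derivedSubalg 𝔫)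
    (hπW : ∀ z ∈ derivedSubalg 𝔫, π z = 0) (t : ℝ) (x y : 𝔫) :
    dil π t (bch x y) = bch (dil π t x) (dil π t y) := by
  rw [bch, bch, dil_add, dil_add, dil_smul,
    dil_of_mem_derivedSubalg hπW t (lie_mem_derivedSubalg x y), lie_dil_dil h2 hπ]

end TwoStep

section CentralDefects

variable {𝔫 : Type*} [LieRing 𝔫] [LieAlgebra ℝ 𝔫]

def centralDefects (d : 𝔫 → 𝔫 → ℝ) (nZ : 𝔫 → ℝ) (r : ℝ) : Set ℝ :=
  {a : ℝ | ∃ x y : 𝔫, d 0 x ≤ r ∧ d 0 y ≤ r ∧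
    bch (-x) y ∈ derivedSubalg 𝔫 ∧ a = nZ (bch (-x) y)}

variable {d : 𝔫 → 𝔫 → ℝ} {nZ : 𝔫 → ℝ}

theorem continuous_bch [FiniteDimensional ℝ 𝔫] [TopologicalSpace 𝔫] [IsTopologicalAddGroup 𝔫]
    [ContinuousSMul ℝ 𝔫] [T2Space 𝔫] : Continuous fun p : 𝔫 × 𝔫 => bch p.1 p.2 :=
  (continuous_fst.add continuous_snd).add <| continuous_const.smul
    ((LieAlgebra.ad ℝ 𝔫 : 𝔫 →ₗ[ℝ] Module.End ℝ 𝔫).continuous_uncurry_of_finiteDimensional)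

theorem bddAbove_centralDefects [FiniteDimensional ℝ 𝔫] [TopologicalSpace 𝔫]
    [IsTopologicalAddGroup 𝔫] [ContinuousSMul ℝ 𝔫] [T2Space 𝔫]
    (hdProper : ∀ (c : 𝔫) (R : ℝ), IsCompact {x : 𝔫 | d c x ≤ R})
    (hnZ : IsNormOn (derivedSubalg 𝔫) nZ) (r : ℝ) : BddAbove (centralDefects d nZ r) := by
  have hK : IsCompact ((fun p : 𝔫 × 𝔫 => bch (-p.1) p.2) '' ({x | d 0 x ≤ r} ×ˢ {x | d 0 x ≤ r})) :=
    ((hdProper 0 r).prod (hdProper 0 r)).image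
      (continuous_bch.comp (continuous_fst.neg.prodMk continuous_snd))
  refine (hnZ.bddAbove_image_inter hK).mono ?_
  rintro _ ⟨x, y, hx, hy, hmem, rfl⟩
  exact ⟨_, ⟨⟨(x, y), ⟨hx, hy⟩, rfl⟩, hmem⟩, rfl⟩

variable {π : 𝔫 →ₗ[ℝ] 𝔫}

theorem smul_centralDefects_subset (h2 : ∀ x y z : 𝔫, ⁅⁅x, y⁆, z⁆ = 0)
    (hπ : ∀ x, x - π x ∈ derivedSubalg 𝔫) (hπW : ∀ z ∈ derivedSubalg 𝔫, π z = 0)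
    (hdHom : ∀ t : ℝ, 0 < t → ∀ x y : 𝔫, d (dil π t x) (dil π t y) = t * d x y)
    (hnZ : IsNormOn (derivedSubalg 𝔫) nZ) {t : ℝ} (ht : 0 < t) (r : ℝ) :
    t ^ 2 • centralDefects d nZ r ⊆ centralDefects d nZ (t * r) := by
  have hball : ∀ x, d 0 x ≤ r → d 0 (dil π t x) ≤ t * r := fun x hx => by
    rw [← dil_zero π t, hdHom t ht]
    exact mul_le_mul_of_nonneg_left hx ht.le
  rintro _ ⟨_, ⟨x, y, hx, hy, hmem, rfl⟩, rfl⟩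
  have hdefect : bch (-dil π t x) (dil π t y) = t ^ 2 • bch (-x) y := by
    rw [← dil_neg, ← dil_bch h2 hπ hπW, dil_of_mem_derivedSubalg hπW t hmem]
  refine ⟨dil π t x, dil π t y, hball x hx, hball y hy, ?_, ?_⟩
  · rw [hdefect]
    exact (derivedSubalg 𝔫).smul_mem _ hmem
  · rw [hdefect, hnZ.smul _ _ hmem, abs_of_pos (pow_pos ht 2)]
    rfl

theorem centralDefects_mul (h2 : ∀ x y z : 𝔫, ⁅⁅x, y⁆, z⁆ = 0)
    (hπ : ∀ x, x - π x ∈ derivedSubalg 𝔫) (hπW : ∀ z ∈ derivedSubalg 𝔫, π z = 0)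
    (hdHom : ∀ t : ℝ, 0 < t → ∀ x y : 𝔫, d (dil π t x) (dil π t y) = t * d x y)
    (hnZ : IsNormOn (derivedSubalg 𝔫) nZ) {t : ℝ} (ht : 0 < t) (r : ℝ) :
    centralDefects d nZ (t * r) = t ^ 2 • centralDefects d nZ r := by
  refine subset_antisymm ?_ (smul_centralDefects_subset h2 hπ hπW hdHom hnZ ht r)
  rw [subset_smul_set_iff₀ (pow_ne_zero 2 ht.ne'), ← inv_pow]
  convert smul_centralDefects_subset h2 hπ hπW hdHom hnZ (inv_pos.mpr ht) (t * r) using 2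
  rw [inv_mul_cancel_left₀ ht.ne']

end CentralDefects

theorem sup_central_defect_scaling_general {𝔫 : Type*} [LieRing 𝔫] [LieAlgebra ℝ 𝔫]
    [FiniteDimensional ℝ 𝔫] [TopologicalSpace 𝔫] [IsTopologicalAddGroup 𝔫]
    [ContinuousSMul ℝ 𝔫] [T2Space 𝔫]
    (h2 : ∀ x y z : 𝔫, ⁅⁅x, y⁆, z⁆ = 0)
    (V : Submodule ℝ 𝔫) (hV : IsCompl V (derivedSubalg 𝔫))
    (π : 𝔫 →ₗ[ℝ] 𝔫) (hπid : ∀ v ∈ V, π v = v)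
    (hπker : ∀ z ∈ derivedSubalg 𝔫, π z = 0)
    (d : 𝔫 → 𝔫 → ℝ)
    (hdHom : ∀ t : ℝ, 0 < t → ∀ x y : 𝔫, d (dil π t x) (dil π t y) = t * d x y)
    (hdProper : ∀ (c : 𝔫) (R : ℝ), IsCompact {x : 𝔫 | d c x ≤ R})
    (nZ : 𝔫 → ℝ) (hnZ : IsNormOn (derivedSubalg 𝔫) nZ) :
    BddAbove {a : ℝ | ∃ x y : 𝔫, d 0 x ≤ 1 ∧ d 0 y ≤ 1 ∧
        bch (-x) y ∈ derivedSubalg 𝔫 ∧ a = nZ (bch (-x) y)} ∧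
    ∀ r : ℝ, 1 ≤ r →
      sSup {a : ℝ | ∃ x y : 𝔫, d 0 x ≤ r ∧ d 0 y ≤ r ∧
          bch (-x) y ∈ derivedSubalg 𝔫 ∧ a = nZ (bch (-x) y)} =
        sSup {a : ℝ | ∃ x y : 𝔫, d 0 x ≤ 1 ∧ d 0 y ≤ 1 ∧
            bch (-x) y ∈ derivedSubalg 𝔫 ∧ a = nZ (bch (-x) y)} * r ^ 2 := by
  have hπ := sub_apply_mem_of_codisjoint hV.codisjoint hπid hπker
  refine ⟨bddAbove_centralDefects hdProper hnZ 1, fun r hr => ?_⟩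
  have hscale := centralDefects_mul h2 hπ hπker hdHom hnZ (one_pos.trans_le hr) 1
  rw [mul_one] at hscale
  change sSup (centralDefects d nZ r) = sSup (centralDefects d nZ 1) * r ^ 2
  rw [hscale, Real.sSup_smul_of_nonneg (sq_nonneg r), smul_eq_mul, mul_comm]

/-- Lemma 3.2 of the paper: for a left-invariant, homogeneous, proper metric `d` on the
BCH group of a 2-step nilpotent Lie algebra, and a norm `‖·‖_Z` on `⁅𝔫, 𝔫⁆`, the quantity
`K₁ = sup{‖(-x) ∘ y‖_Z : d(0,x) ≤ 1, d(0,y) ≤ 1, (-x) ∘ y ∈ ⁅𝔫, 𝔫⁆}` is finite, and for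
every `r ≥ 1` the corresponding supremum over the `r`-balls equals `K₁ · r²`.
The topology on `𝔫` is the (unique) Hausdorff vector topology of the finite-dimensional
real vector space `𝔫`, i.e. the norm topology. -/
theorem sup_central_defect_scaling {𝔫 : Type*} [LieRing 𝔫] [LieAlgebra ℝ 𝔫]
    [FiniteDimensional ℝ 𝔫] [TopologicalSpace 𝔫] [IsTopologicalAddGroup 𝔫]
    [ContinuousSMul ℝ 𝔫] [T2Space 𝔫]
    (h2 : ∀ x y z : 𝔫, ⁅⁅x, y⁆, z⁆ = 0)
    (V : Submodule ℝ 𝔫) (hV : IsCompl V (derivedSubalg 𝔫))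
    (π : 𝔫 →ₗ[ℝ] 𝔫) (hπmem : ∀ x : 𝔫, π x ∈ V) (hπid : ∀ v ∈ V, π v = v)
    (hπker : ∀ z ∈ derivedSubalg 𝔫, π z = 0)
    (d : 𝔫 → 𝔫 → ℝ) (hd : IsMetricFun d)
    (hdLeft : ∀ g x y : 𝔫, d (bch g x) (bch g y) = d x y)
    (hdHom : ∀ t : ℝ, 0 < t → ∀ x y : 𝔫, d (dil π t x) (dil π t y) = t * d x y)
    (hdProper : ∀ (c : 𝔫) (R : ℝ), IsCompact {x : 𝔫 | d c x ≤ R})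
    (nZ : 𝔫 → ℝ) (hnZ : IsNormOn (derivedSubalg 𝔫) nZ) :
    BddAbove {a : ℝ | ∃ x y : 𝔫, d 0 x ≤ 1 ∧ d 0 y ≤ 1 ∧
        bch (-x) y ∈ derivedSubalg 𝔫 ∧ a = nZ (bch (-x) y)} ∧
    ∀ r : ℝ, 1 ≤ r →
      sSup {a : ℝ | ∃ x y : 𝔫, d 0 x ≤ r ∧ d 0 y ≤ r ∧
          bch (-x) y ∈ derivedSubalg 𝔫 ∧ a = nZ (bch (-x) y)} =
        sSup {a : ℝ | ∃ x y : 𝔫, d 0 x ≤ 1 ∧ d 0 y ≤ 1 ∧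
            bch (-x) y ∈ derivedSubalg 𝔫 ∧ a = nZ (bch (-x) y)} * r ^ 2 :=
  sup_central_defect_scaling_general h2 V hV π hπid hπker d hdHom hdProper nZ hnZ
end
end

section
/- Let 𝔫 be a finite-dimensional real 2-step nilpotent Lie algebra that is non-singular, V∞ a complement of ⁅𝔫, 𝔫⁆, ‖·‖∞ a norm on V∞, and ‖·‖_Z a norm on ⁅𝔫, 𝔫⁆. Then there exists L > 0 such that for every h ∈ ⁅𝔫, 𝔫⁆ with h ≠ 0, there exist X, Y ∈ V∞ with ‖X‖∞ = ‖Y‖∞ = 1 and a real number c > 0 such that ⁅X, Y⁆ = c · h and ‖⁅X, Y⁆‖_Z ≥ L. -/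
noncomputable section

/-- A 2-step nilpotent Lie algebra is non-singular if every element of `⁅𝔫, 𝔫⁆` is a
bracket `⁅x, y⁆` for every fixed `x ∉ ⁅𝔫, 𝔫⁆`. -/
def Nonsingular (𝔫 : Type*) [LieRing 𝔫] [LieAlgebra ℝ 𝔫] : Prop :=
  ∀ z ∈ derivedSubalg 𝔫, ∀ x : 𝔫, x ∉ derivedSubalg 𝔫 → ∃ y : 𝔫, ⁅x, y⁆ = z

/-- Lemma 3.3 of the paper: in a non-singular 2-step nilpotent Lie algebra, there is a
uniform constant `L > 0` such that every nonzero `h ∈ ⁅𝔫, 𝔫⁆` is a positive multiple of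
a bracket `⁅X, Y⁆` of unit vectors `X, Y ∈ V∞` with `‖⁅X, Y⁆‖_Z ≥ L`. -/
theorem uniform_bracket_of_unit_vectors {𝔫 : Type*} [LieRing 𝔫] [LieAlgebra ℝ 𝔫]
    [FiniteDimensional ℝ 𝔫]
    (h2 : ∀ x y z : 𝔫, ⁅⁅x, y⁆, z⁆ = 0)
    (hns : Nonsingular 𝔫)
    (V : Submodule ℝ 𝔫) (hV : IsCompl V (derivedSubalg 𝔫))
    (nV : 𝔫 → ℝ) (hnV : IsNormOn V nV)
    (nZ : 𝔫 → ℝ) (hnZ : IsNormOn (derivedSubalg 𝔫) nZ) :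
    ∃ L : ℝ, 0 < L ∧ ∀ h ∈ derivedSubalg 𝔫, h ≠ 0 →
      ∃ X ∈ V, ∃ Y ∈ V, nV X = 1 ∧ nV Y = 1 ∧
        (∃ c : ℝ, 0 < c ∧ ⁅X, Y⁆ = c • h) ∧ L ≤ nZ ⁅X, Y⁆ := by
  classical
  by_cases hD : ∀ h ∈ derivedSubalg 𝔫, h = 0
  · exact ⟨1, one_pos, fun h hh hne => absurd (hD h hh) hne⟩
  push_neg at hD
  obtain ⟨h₀, hh₀, hne₀⟩ := hD
  -- brackets generate the derived subalgebra
  have brmem : ∀ a b : 𝔫, ⁅a, b⁆ ∈ derivedSubalg 𝔫 :=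
    fun a b => Submodule.subset_span ⟨a, b, rfl⟩
  -- the derived subalgebra is central
  have central : ∀ z ∈ derivedSubalg 𝔫, ∀ a : 𝔫, ⁅z, a⁆ = 0 := by
    let C : Submodule ℝ 𝔫 :=
    { carrier := {z : 𝔫 | ∀ a : 𝔫, ⁅z, a⁆ = 0}
      add_mem' := fun hx hy a => by rw [add_lie, hx a, hy a, add_zero]
      zero_mem' := fun a => zero_lie a
      smul_mem' := fun c x hx a => by rw [smul_lie, hx a, smul_zero] }
    have hle : derivedSubalg 𝔫 ≤ C := Submodule.span_le.mpr (by
      rintro z ⟨x, y, rfl⟩; exact h2 x y)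
    exact fun z hz => hle hz
  have central' : ∀ z ∈ derivedSubalg 𝔫, ∀ a : 𝔫, ⁅a, z⁆ = 0 := by
    intro z hz a
    rw [← lie_skew, central z hz a, neg_zero]
  -- there is an element outside the derived subalgebra
  have hx_exists : ∃ x : 𝔫, x ∉ derivedSubalg 𝔫 := by
    by_contra hc
    push_neg at hc
    have hle : derivedSubalg 𝔫 ≤ ⊥ := Submodule.span_le.mpr (by
      rintro z ⟨x, y, rfl⟩
      simpa [Submodule.mem_bot] using central x (hc x) y)
    exact hne₀ (Submodule.mem_bot ℝ |>.mp (hle hh₀))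
  obtain ⟨x, hx⟩ := hx_exists
  -- project it to V to get a nonzero element of V outside the derived subalgebra
  obtain ⟨v, hvV, w, hw, hvw⟩ := Submodule.mem_sup.mp
    (show x ∈ V ⊔ derivedSubalg 𝔫 from hV.sup_eq_top ▸ Submodule.mem_top)
  have hvnd : v ∉ derivedSubalg 𝔫 := by
    intro hvd
    exact hx (hvw ▸ Submodule.add_mem _ hvd hw)
  have hv0 : v ≠ 0 := fun h0 => hvnd (h0 ▸ Submodule.zero_mem _)
  have hnVv : 0 < nV v := by
    rcases lt_or_eq_of_le (hnV.nonneg v hvV) with h' | h'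
    · exact h'
    · exact absurd (hnV.eq_zero v hvV h'.symm) hv0
  -- the normalized element X
  set X : 𝔫 := (nV v)⁻¹ • v with hXdef
  have hXV : X ∈ V := Submodule.smul_mem _ _ hvV
  have hXnd : X ∉ derivedSubalg 𝔫 := by
    intro hXd
    apply hvnd
    have : (nV v) • X = v := by
      rw [hXdef, smul_smul, mul_inv_cancel₀ (ne_of_gt hnVv), one_smul]
    exact this ▸ Submodule.smul_mem _ _ hXd
  have hnVX : nV X = 1 := by
    rw [hXdef, hnV.smul _ _ hvV, abs_of_pos (inv_pos.mpr hnVv),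
      inv_mul_cancel₀ (ne_of_gt hnVv)]
  -- the bracket map B : V → derived, v ↦ ⁅X, v⁆, is linear and surjective
  let B : V →ₗ[ℝ] derivedSubalg 𝔫 :=
  { toFun := fun u => ⟨⁅X, (u : 𝔫)⁆, brmem _ _⟩
    map_add' := fun a b => by ext; simp [lie_add]
    map_smul' := fun c a => by ext; simp [lie_smul] }
  have hBsurj : Function.Surjective B := by
    rintro ⟨z, hz⟩
    obtain ⟨y, hy⟩ := hns z hz X hXnd
    obtain ⟨a, ha, b, hb, hab⟩ := Submodule.mem_sup.mp
      (show y ∈ V ⊔ derivedSubalg 𝔫 from hV.sup_eq_top ▸ Submodule.mem_top)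
    refine ⟨⟨a, ha⟩, ?_⟩
    ext
    show ⁅X, a⁆ = z
    calc ⁅X, a⁆ = ⁅X, a + b⁆ := by rw [lie_add, central' b hb X, add_zero]
    _ = z := by rw [hab, hy]
  obtain ⟨s, hsec⟩ := B.exists_rightInverse_of_surjective (LinearMap.range_eq_top.mpr hBsurj)
  -- norm structures on V and on the derived subalgebra
  letI : Norm V := ⟨fun u => nV u⟩
  letI : Norm (derivedSubalg 𝔫) := ⟨fun z => nZ z⟩
  have coreV : NormedSpace.Core ℝ V :=
  { norm_nonneg := fun u => hnV.nonneg u u.2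
    norm_smul := fun c u => by
      show nV ((c • u : V) : 𝔫) = ‖c‖ * nV u
      rw [Submodule.coe_smul, hnV.smul c u u.2, Real.norm_eq_abs]
    norm_triangle := fun a b => hnV.add_le a a.2 b b.2
    norm_eq_zero_iff := fun u => by
      constructor
      · intro h'; exact Subtype.ext (hnV.eq_zero u u.2 h')
      · intro h'; subst h'
        show nV ((0 : V) : 𝔫) = 0
        have := hnV.smul 0 0 (V.zero_mem)
        simpa using this }
  have coreZ : NormedSpace.Core ℝ (derivedSubalg 𝔫) :=
  { norm_nonneg := fun u => hnZ.nonneg u u.2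
    norm_smul := fun c u => by
      show nZ ((c • u : derivedSubalg 𝔫) : 𝔫) = ‖c‖ * nZ u
      rw [Submodule.coe_smul, hnZ.smul c u u.2, Real.norm_eq_abs]
    norm_triangle := fun a b => hnZ.add_le a a.2 b b.2
    norm_eq_zero_iff := fun u => by
      constructor
      · intro h'; exact Subtype.ext (hnZ.eq_zero u u.2 h')
      · intro h'; subst h'
        show nZ ((0 : derivedSubalg 𝔫) : 𝔫) = 0
        have := hnZ.smul 0 0 ((derivedSubalg 𝔫).zero_mem)
        simpa using this }
  letI : NormedAddCommGroup V := NormedAddCommGroup.ofCore coreV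
  letI : NormedSpace ℝ V := NormedSpace.ofCore coreV
  letI : NormedAddCommGroup (derivedSubalg 𝔫) := NormedAddCommGroup.ofCore coreZ
  letI : NormedSpace ℝ (derivedSubalg 𝔫) := NormedSpace.ofCore coreZ
  -- the section s is bounded
  have hscont : Continuous s := s.continuous_of_finiteDimensional
  obtain ⟨C, hC, hbound⟩ : ∃ C : ℝ, 0 < C ∧ ∀ z : derivedSubalg 𝔫, ‖s z‖ ≤ C * ‖z‖ := by
    obtain ⟨C, hCpos, hC⟩ :=
      (⟨s, hscont⟩ : (derivedSubalg 𝔫) →L[ℝ] V).isBoundedLinearMap.bound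
    exact ⟨C, hCpos, fun z => hC z⟩
  refine ⟨C⁻¹, inv_pos.mpr hC, ?_⟩
  intro h hh hne
  set z : derivedSubalg 𝔫 := ⟨h, hh⟩ with hzdef
  have hBz : ⁅X, ((s z : V) : 𝔫)⁆ = h := by
    have := LinearMap.congr_fun hsec z
    exact congrArg Subtype.val this
  set y : V := s z with hydef
  have hy0 : (y : 𝔫) ≠ 0 := by
    intro h0
    apply hne
    rw [← hBz, h0, lie_zero]
  have hr : 0 < nV (y : 𝔫) := by
    rcases lt_or_eq_of_le (hnV.nonneg _ y.2) with h' | h'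
    · exact h'
    · exact absurd (hnV.eq_zero _ y.2 h'.symm) hy0
  set r : ℝ := nV (y : 𝔫) with hrdef
  have hnZh : 0 < nZ h := by
    rcases lt_or_eq_of_le (hnZ.nonneg h hh) with h' | h'
    · exact h'
    · exact absurd (hnZ.eq_zero h hh h'.symm) hne
  refine ⟨X, hXV, r⁻¹ • (y : 𝔫), Submodule.smul_mem _ _ y.2, hnVX, ?_, ⟨r⁻¹, inv_pos.mpr hr, ?_⟩, ?_⟩
  · rw [hnV.smul _ _ y.2, abs_of_pos (inv_pos.mpr hr), ← hrdef,
      inv_mul_cancel₀ (ne_of_gt hr)]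
  · rw [lie_smul, hBz]
  · have hbr : ⁅X, r⁻¹ • (y : 𝔫)⁆ = r⁻¹ • h := by rw [lie_smul, hBz]
    rw [hbr, hnZ.smul _ _ hh, abs_of_pos (inv_pos.mpr hr)]
    have hrC : r ≤ C * nZ h := hbound z
    calc C⁻¹ = (C * nZ h)⁻¹ * nZ h := by
          field_simp
      _ ≤ r⁻¹ * nZ h := by
          apply mul_le_mul_of_nonneg_right _ (le_of_lt hnZh)
          exact inv_anti₀ hr hrC
end
end

section
/- Let 𝔫 be a finite-dimensional real 2-step nilpotent Lie algebra that is non-singular, with complement V∞ of ⁅𝔫, 𝔫⁆, projection π, norm ‖·‖∞ on V∞, and norm ‖·‖_Z on ⁅𝔫, 𝔫⁆. Let d∞ be a metric on 𝔫 satisfying d∞(0, v) = ‖v‖∞ for every v ∈ V∞. Then there exists L₀ > 0 such that for all r₁, r₂ > 0 and every g ∈ 𝔫 with ‖π(g)‖∞ = r₁, every z ∈ ⁅𝔫, 𝔫⁆ with ‖z‖_Z ≤ L₀ r₁ r₂ can be written as z = ⁅g, y⁆ for some y ∈ 𝔫 with d∞(0, y) ≤ r₂. -/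
noncomputable section

/-- Auxiliary: a uniform bound for preimages of surjective linear maps depending
linearly on a parameter on the unit sphere, via compactness. -/
theorem uniform_section_bound {E F : Type*} [NormedAddCommGroup E] [NormedSpace ℝ E]
    [FiniteDimensional ℝ E] [NormedAddCommGroup F] [NormedSpace ℝ F] [FiniteDimensional ℝ F]
    (Φ : E →ₗ[ℝ] (E →L[ℝ] F))
    (hsurj : ∀ g : E, ‖g‖ = 1 → Function.Surjective (Φ g)) :
    ∃ C : ℝ, 0 < C ∧ ∀ g : E, ‖g‖ = 1 → ∀ z : F, ∃ y : E, Φ g y = z ∧ ‖y‖ ≤ C * ‖z‖ := by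
  classical
  set S : ℕ → Set E := fun n => {g | ∀ z : F, ∃ y : E, Φ g y = z ∧ ‖y‖ ≤ n * ‖z‖} with hSdef
  have hΦcont : Continuous Φ := Φ.continuous_of_finiteDimensional
  have hcov : Metric.sphere (0:E) 1 ⊆ ⋃ n : ℕ, interior (S n) := by
    intro g₀ hg₀
    have hg₀n : ‖g₀‖ = 1 := by simpa using hg₀
    obtain ⟨s, hs⟩ := ((Φ g₀) : E →ₗ[ℝ] F).exists_rightInverse_of_surjective
      (LinearMap.range_eq_top.2 (hsurj g₀ hg₀n))
    set sC := LinearMap.toContinuousLinearMap s with hsCdef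
    set C₀ := ‖sC‖ with hC₀def
    have hC₀ : 0 ≤ C₀ := norm_nonneg _
    set ε : ℝ := (2 * (C₀ + 1))⁻¹ with hεdef
    have hεpos : 0 < ε := by positivity
    obtain ⟨n, hn⟩ := exists_nat_ge (2 * C₀)
    have hU : ∀ g : E, ‖Φ g - Φ g₀‖ < ε → g ∈ S n := by
      intro g hg
      have hidz : ∀ z : F, Φ g₀ (sC z) = z := by
        intro z
        have := LinearMap.ext_iff.1 hs z
        simpa [hsCdef, LinearMap.coe_toContinuousLinearMap'] using this
      set Eε := (Φ g - Φ g₀).comp sC with hEεdef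
      have hεC : ε * (C₀ + 1) = 1/2 := by
        rw [hεdef]; field_simp
      have hEεnorm : ‖Eε‖ ≤ 1/2 := by
        calc ‖Eε‖ ≤ ‖Φ g - Φ g₀‖ * ‖sC‖ := ContinuousLinearMap.opNorm_comp_le _ _
          _ ≤ ε * (C₀ + 1) := by
              apply mul_le_mul hg.le (by linarith) hC₀ hεpos.le
          _ = 1/2 := hεC
      have hlt : ‖-Eε‖ < 1 := by rw [norm_neg]; linarith
      set u : (F →L[ℝ] F)ˣ := Units.oneSub (-Eε) hlt with hudef
      set w : F →L[ℝ] F := ↑u⁻¹ with hwdef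
      have hcomp : (Φ g).comp sC = 1 - (-Eε) := by
        ext z
        simp only [ContinuousLinearMap.comp_apply, ContinuousLinearMap.sub_apply,
          ContinuousLinearMap.neg_apply, ContinuousLinearMap.one_apply,
          ContinuousLinearMap.add_apply, hEεdef, sub_neg_eq_add]
        rw [hidz z]
        abel
      have hmul : (1 - (-Eε)) * w = 1 := u.mul_inv
      have hw2 : ‖w‖ ≤ 2 := by
        have h2 : w + Eε * w = 1 := by
          have := hmul
          rw [sub_neg_eq_add, add_mul, one_mul] at this
          exact this
        have h1 : w = 1 - Eε * w := eq_sub_of_add_eq h2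
        have h3 : ‖w‖ ≤ 1 + ‖Eε‖ * ‖w‖ := by
          calc ‖w‖ = ‖1 - Eε * w‖ := by rw [← h1]
            _ ≤ ‖(1 : F →L[ℝ] F)‖ + ‖Eε * w‖ := norm_sub_le _ _
            _ ≤ 1 + ‖Eε‖ * ‖w‖ := by
                gcongr
                · exact ContinuousLinearMap.norm_id_le
                · exact norm_mul_le _ _
        nlinarith [norm_nonneg w]
      intro z
      refine ⟨sC (w z), ?_, ?_⟩
      · have : Φ g (sC (w z)) = ((Φ g).comp sC) (w z) := rfl
        rw [this, hcomp, ← ContinuousLinearMap.mul_apply, hmul, ContinuousLinearMap.one_apply]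
      · calc ‖sC (w z)‖ ≤ ‖sC‖ * ‖w z‖ := sC.le_opNorm _
          _ ≤ C₀ * (‖w‖ * ‖z‖) := by gcongr; exact w.le_opNorm _
          _ ≤ C₀ * (2 * ‖z‖) := by gcongr
          _ = 2 * C₀ * ‖z‖ := by ring
          _ ≤ n * ‖z‖ := by gcongr
    refine Set.mem_iUnion.2 ⟨n, ?_⟩
    have hUopen : IsOpen ((fun g => Φ g) ⁻¹' Metric.ball (Φ g₀) ε) :=
      Metric.isOpen_ball.preimage hΦcont
    have hsub : (fun g => Φ g) ⁻¹' Metric.ball (Φ g₀) ε ⊆ S n := by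
      intro g hg
      exact hU g (by simpa [dist_eq_norm] using hg)
    exact (hUopen.subset_interior_iff.2 hsub) (by simp [Metric.mem_ball, hεpos])
  obtain ⟨t, ht⟩ := (isCompact_sphere (0:E) 1).elim_finite_subcover
    (fun n => interior (S n)) (fun n => isOpen_interior) hcov
  refine ⟨(t.sup id : ℕ) + 1, by positivity, ?_⟩
  intro g hg z
  have hgs : g ∈ Metric.sphere (0:E) 1 := by simpa using hg
  obtain ⟨n, hnt, hgn⟩ := Set.mem_iUnion₂.1 (ht hgs)
  obtain ⟨y, hy1, hy2⟩ := (interior_subset hgn) z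
  refine ⟨y, hy1, hy2.trans ?_⟩
  have hle : (n : ℝ) ≤ (t.sup id : ℕ) + 1 := by
    have h0 : n ≤ t.sup id := Finset.le_sup (f := id) hnt
    have h4 : (n : ℝ) ≤ ((t.sup id : ℕ) : ℝ) := Nat.cast_le.2 h0
    linarith
  exact mul_le_mul_of_nonneg_right hle (norm_nonneg _)

/-- Lemma 4.1 of the paper: in a non-singular 2-step nilpotent Lie algebra, there is
`L₀ > 0` such that for all `r₁, r₂ > 0` and every `g` with `‖π g‖∞ = r₁`, every
`z ∈ ⁅𝔫, 𝔫⁆` with `‖z‖_Z ≤ L₀ r₁ r₂` is a commutator `⁅g, y⁆` with `d∞(0, y) ≤ r₂`. -/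
theorem nonsingular_commutator_ball {𝔫 : Type*} [LieRing 𝔫] [LieAlgebra ℝ 𝔫]
    [FiniteDimensional ℝ 𝔫]
    (h2 : ∀ x y z : 𝔫, ⁅⁅x, y⁆, z⁆ = 0)
    (hns : Nonsingular 𝔫)
    (V : Submodule ℝ 𝔫) (hV : IsCompl V (derivedSubalg 𝔫))
    (π : 𝔫 →ₗ[ℝ] 𝔫) (hπmem : ∀ x : 𝔫, π x ∈ V) (hπid : ∀ v ∈ V, π v = v)
    (hπker : ∀ z ∈ derivedSubalg 𝔫, π z = 0)
    (nV : 𝔫 → ℝ) (hnV : IsNormOn V nV)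
    (nZ : 𝔫 → ℝ) (hnZ : IsNormOn (derivedSubalg 𝔫) nZ)
    (dInfty : 𝔫 → 𝔫 → ℝ) (hdInfty : IsMetricFun dInfty)
    (hdV : ∀ v ∈ V, dInfty 0 v = nV v) :
    ∃ L₀ : ℝ, 0 < L₀ ∧ ∀ r₁ r₂ : ℝ, 0 < r₁ → 0 < r₂ →
      ∀ g : 𝔫, nV (π g) = r₁ →
        ∀ z ∈ derivedSubalg 𝔫, nZ z ≤ L₀ * r₁ * r₂ →
          ∃ y : 𝔫, dInfty 0 y ≤ r₂ ∧ ⁅g, y⁆ = z := by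
  classical
  -- elements of the derived subalgebra are central
  have central : ∀ w ∈ derivedSubalg 𝔫, ∀ x : 𝔫, ⁅w, x⁆ = 0 := by
    intro w hw x
    induction hw using Submodule.span_induction with
    | mem a ha => obtain ⟨p, q, hpq⟩ := ha; rw [← hpq]; exact h2 p q x
    | zero => exact zero_lie x
    | add a b _ _ hpa hpb => rw [add_lie, hpa, hpb, add_zero]
    | smul c a _ hpa => rw [smul_lie, hpa, smul_zero]
  -- x - π x lies in the derived subalgebra
  have hdecomp : ∀ x : 𝔫, x - π x ∈ derivedSubalg 𝔫 := by
    intro x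
    have hx : x ∈ V ⊔ derivedSubalg 𝔫 := by rw [hV.sup_eq_top]; trivial
    obtain ⟨v, hv, w, hw, hvw⟩ := Submodule.mem_sup.1 hx
    have hπx : π x = v := by
      rw [← hvw, map_add, hπid v hv, hπker w hw, add_zero]
    rw [hπx, ← hvw]
    simpa using hw
  -- norm instances
  have hzeroV : nV 0 = 0 := by simpa using hnV.smul 0 0 V.zero_mem
  have hzeroZ : nZ 0 = 0 := by simpa using hnZ.smul 0 0 (derivedSubalg 𝔫).zero_mem
  letI : NormedAddCommGroup V := AddGroupNorm.toNormedAddCommGroup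
    { toFun := fun x => nV x
      map_zero' := hzeroV
      add_le' := fun a b => hnV.add_le a a.2 b b.2
      neg' := fun a => by simpa using hnV.smul (-1) a a.2
      eq_zero_of_map_eq_zero' := fun a h => Subtype.ext (hnV.eq_zero a a.2 h) }
  letI : NormedSpace ℝ V := ⟨fun c x => by
    change nV ((c • x : V) : 𝔫) ≤ ‖c‖ * nV (x : 𝔫)
    rw [Submodule.coe_smul, hnV.smul c x x.2, Real.norm_eq_abs]⟩
  letI : NormedAddCommGroup (derivedSubalg 𝔫) := AddGroupNorm.toNormedAddCommGroup
    { toFun := fun x => nZ x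
      map_zero' := hzeroZ
      add_le' := fun a b => hnZ.add_le a a.2 b b.2
      neg' := fun a => by simpa using hnZ.smul (-1) a a.2
      eq_zero_of_map_eq_zero' := fun a h => Subtype.ext (hnZ.eq_zero a a.2 h) }
  letI : NormedSpace ℝ (derivedSubalg 𝔫) := ⟨fun c x => by
    change nZ ((c • x : derivedSubalg 𝔫) : 𝔫) ≤ ‖c‖ * nZ (x : 𝔫)
    rw [Submodule.coe_smul, hnZ.smul c x x.2, Real.norm_eq_abs]⟩
  -- the bilinear bracket map
  let Abil : V →ₗ[ℝ] V →ₗ[ℝ] derivedSubalg 𝔫 := LinearMap.mk₂ ℝ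
    (fun g y => ⟨⁅(g : 𝔫), (y : 𝔫)⁆, Submodule.subset_span ⟨g, y, rfl⟩⟩)
    (fun a b y => Subtype.ext (by simp [add_lie]))
    (fun c a y => Subtype.ext (by simp [smul_lie]))
    (fun a b y => Subtype.ext (by simp [lie_add]))
    (fun c a y => Subtype.ext (by simp [lie_smul]))
  let Φ : V →ₗ[ℝ] (V →L[ℝ] derivedSubalg 𝔫) :=
    (LinearMap.toContinuousLinearMap :
      (V →ₗ[ℝ] derivedSubalg 𝔫) ≃ₗ[ℝ] (V →L[ℝ] derivedSubalg 𝔫)).toLinearMap ∘ₗ Abil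
  have hΦapp : ∀ (g y : V), ((Φ g y : derivedSubalg 𝔫) : 𝔫) = ⁅(g : 𝔫), (y : 𝔫)⁆ := by
    intro g y
    simp only [Φ, LinearMap.comp_apply, LinearEquiv.coe_toLinearMap,
      LinearMap.coe_toContinuousLinearMap']
    rfl
  have hsurj : ∀ g : V, ‖g‖ = 1 → Function.Surjective (Φ g) := by
    intro g hg z
    have hgne : (g : 𝔫) ∉ derivedSubalg 𝔫 := by
      intro hmem
      have hg0 : (g : 𝔫) = 0 := (Submodule.disjoint_def.1 hV.disjoint) g g.2 hmem
      have : g = (0 : V) := Subtype.ext hg0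
      rw [this, norm_zero] at hg
      norm_num at hg
    obtain ⟨y, hy⟩ := hns z z.2 g hgne
    refine ⟨⟨π y, hπmem y⟩, Subtype.ext ?_⟩
    rw [hΦapp]
    have hc : ⁅(g : 𝔫), y - π y⁆ = 0 := by
      rw [← lie_skew, central _ (hdecomp y) g, neg_zero]
    have := lie_sub (g : 𝔫) y (π y)
    rw [hc] at this
    have hπy : ⁅(g : 𝔫), π y⁆ = ⁅(g : 𝔫), y⁆ := by
      have h0 : (0 : 𝔫) = ⁅(g : 𝔫), y⁆ - ⁅(g : 𝔫), π y⁆ := this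
      exact (eq_of_sub_eq_zero h0.symm).symm
    rw [hπy, hy]
  obtain ⟨C, hC, hCprop⟩ := uniform_section_bound Φ hsurj
  refine ⟨C⁻¹, by positivity, ?_⟩
  intro r₁ r₂ hr₁ hr₂ g hg z hz hzle
  set g' : V := ⟨r₁⁻¹ • π g, V.smul_mem _ (hπmem g)⟩ with hg'def
  have hg'norm : ‖g'‖ = 1 := by
    show nV (r₁⁻¹ • π g) = 1
    rw [hnV.smul _ _ (hπmem g), hg, abs_of_pos (inv_pos.2 hr₁), inv_mul_cancel₀ hr₁.ne']
  set zz : derivedSubalg 𝔫 := ⟨r₁⁻¹ • z, Submodule.smul_mem _ _ hz⟩ with hzzdef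
  obtain ⟨y, hyz, hyn⟩ := hCprop g' hg'norm zz
  have hzznorm : ‖zz‖ ≤ C⁻¹ * r₂ := by
    show nZ (r₁⁻¹ • z) ≤ C⁻¹ * r₂
    rw [hnZ.smul _ _ hz, abs_of_pos (inv_pos.2 hr₁)]
    calc r₁⁻¹ * nZ z ≤ r₁⁻¹ * (C⁻¹ * r₁ * r₂) :=
          mul_le_mul_of_nonneg_left hzle (inv_pos.2 hr₁).le
      _ = C⁻¹ * r₂ := by field_simp
  have hyr₂ : ‖y‖ ≤ r₂ := by
    calc ‖y‖ ≤ C * ‖zz‖ := hyn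
      _ ≤ C * (C⁻¹ * r₂) := mul_le_mul_of_nonneg_left hzznorm hC.le
      _ = r₂ := by field_simp
  refine ⟨(y : 𝔫), ?_, ?_⟩
  · rw [hdV (y : 𝔫) y.2]
    exact hyr₂
  · have hbr : ⁅((g' : V) : 𝔫), (y : 𝔫)⁆ = r₁⁻¹ • z := by
      have := congrArg Subtype.val hyz
      rw [hΦapp] at this
      exact this
    have hbr2 : ⁅π g, (y : 𝔫)⁆ = z := by
      have h3 : ⁅r₁⁻¹ • π g, (y : 𝔫)⁆ = r₁⁻¹ • z := hbr
      rw [smul_lie] at h3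
      have := congrArg (fun t => r₁ • t) h3
      simpa [smul_smul, mul_inv_cancel₀ hr₁.ne'] using this
    have hgdec : ⁅g, (y : 𝔫)⁆ = ⁅π g, (y : 𝔫)⁆ + ⁅g - π g, (y : 𝔫)⁆ := by
      rw [← add_lie]
      congr 1
      abel
    rw [hgdec, hbr2, central _ (hdecomp g) _, add_zero]
end
end
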